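/- Let a > 0, b > 0 and γ̄ > 0. For an exponentially distributed SNR with mean γ̄ (Rayleigh fading), the average of the upper incomplete Gamma function satisfies ∫₀^∞ (1/γ̄) e^{−x/γ̄} · Γ(b, a x) dx = Γ(b) · (1 − (aγ̄/(1 + aγ̄))^{b}), where Γ(b, y) = ∫_y^∞ t^{b−1} e^{−t} dt is the upper incomplete Gamma function and Γ(b) = Γ(b, 0). Consequently the average bit error rate of Wojnar's unified binary modulation scheme over Rayleigh fading is E_avg(γ̄) = (1/2) − (1/2)·(aγ̄/(1+aγ̄))^{b}. -/

import Mathlib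

open MeasureTheory Real

noncomputable def upperIncGamma (b y : ℝ) : ℝ :=
  ∫ t in Set.Ioi y, t ^ (b - 1) * Real.exp (-t)

/-!
Integrate by parts against `G x = -e^{-x/γ̄} Γ(b, ax)`.
Since `∂ₓ Γ(b, ax) = -a^b x^{b-1} e^{-ax}`,
`G' = (1/γ̄) e^{-x/γ̄} Γ(b, ax) + a^b x^{b-1} e^{-(a + 1/γ̄)x}`, while `G(0) = -Γ(b)` and `G(∞) = 0`.
The second summand integrates to `(a/(a + 1/γ̄))^b Γ(b) = (aγ̄/(1 + aγ̄))^b Γ(b)`.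
-/

open Set Filter Topology

section UpperIncGamma

variable {b y : ℝ}

lemma integrableOn_rpow_mul_exp_neg_Ioi (hb : 0 < b) :
    IntegrableOn (fun t : ℝ => t ^ (b - 1) * exp (-t)) (Ioi 0) :=
  (GammaIntegral_convergent hb).congr_fun (fun _ _ => mul_comm _ _) measurableSet_Ioi

lemma integrableOn_rpow_mul_exp_neg_mul_Ioi {c : ℝ} (hb : 0 < b) (hc : 0 < c) :
    IntegrableOn (fun t : ℝ => t ^ (b - 1) * exp (-(c * t))) (Ioi 0) :=
  (integrableOn_rpow_mul_exp_neg_mul_rpow (s := b - 1) (by linarith) one_pos hc).congr_fun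
    (fun t _ => by simp only [rpow_one, neg_mul]) measurableSet_Ioi

lemma upperIncGamma_zero (hb : 0 < b) : upperIncGamma b 0 = Gamma b := by
  rw [Gamma_eq_integral hb]
  exact setIntegral_congr_fun measurableSet_Ioi fun _ _ => mul_comm _ _

lemma upperIncGamma_nonneg (hy : 0 ≤ y) : 0 ≤ upperIncGamma b y :=
  setIntegral_nonneg measurableSet_Ioi fun _ ht =>
    mul_nonneg (rpow_nonneg (hy.trans ht.le) _) (exp_nonneg _)

lemma upperIncGamma_le_Gamma (hb : 0 < b) (hy : 0 ≤ y) : upperIncGamma b y ≤ Gamma b := by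
  rw [← upperIncGamma_zero hb]
  refine setIntegral_mono_set (integrableOn_rpow_mul_exp_neg_Ioi hb) ?_
    (Ioi_subset_Ioi hy).eventuallyLE
  exact (ae_restrict_iff' measurableSet_Ioi).mpr <| ae_of_all _ fun t ht =>
    mul_nonneg (rpow_nonneg (le_of_lt ht) _) (exp_nonneg _)

lemma upperIncGamma_eq_Gamma_sub_integral (hb : 0 < b) (hy : 0 ≤ y) :
    upperIncGamma b y = Gamma b - ∫ t in (0 : ℝ)..y, t ^ (b - 1) * exp (-t) := by
  have hint := integrableOn_rpow_mul_exp_neg_Ioi hb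
  have hsplit := setIntegral_union (Ioc_disjoint_Ioi le_rfl) measurableSet_Ioi
    (hint.mono_set Ioc_subset_Ioi_self) (hint.mono_set (Ioi_subset_Ioi hy))
  rw [Ioc_union_Ioi_eq_Ioi hy] at hsplit
  rw [← upperIncGamma_zero hb, intervalIntegral.integral_of_le hy]
  unfold upperIncGamma
  linarith

lemma intervalIntegrable_rpow_mul_exp_neg (hb : 0 < b) (hy : 0 ≤ y) :
    IntervalIntegrable (fun t : ℝ => t ^ (b - 1) * exp (-t)) volume 0 y :=
  (intervalIntegrable_iff_integrableOn_Ioc_of_le hy).mpr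
    ((integrableOn_rpow_mul_exp_neg_Ioi hb).mono_set Ioc_subset_Ioi_self)

lemma hasDerivAt_upperIncGamma (hb : 0 < b) (hy : 0 < y) :
    HasDerivAt (upperIncGamma b) (-(y ^ (b - 1) * exp (-y))) y := by
  have hcont : ContinuousAt (fun t : ℝ => t ^ (b - 1) * exp (-t)) y :=
    (continuousAt_rpow_const y (b - 1) (Or.inl hy.ne')).mul (by fun_prop)
  have hmeas : StronglyMeasurableAtFilter (fun t : ℝ => t ^ (b - 1) * exp (-t)) (𝓝 y) :=
    (by fun_prop : Measurable fun t : ℝ => t ^ (b - 1) * exp (-t)).stronglyMeasurable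
      |>.stronglyMeasurableAtFilter
  have hprim := intervalIntegral.integral_hasDerivAt_right
    (intervalIntegrable_rpow_mul_exp_neg hb hy.le) hmeas hcont
  refine ((hasDerivAt_const y (Gamma b)).sub hprim).congr_deriv (zero_sub _)
    |>.congr_of_eventuallyEq ?_
  filter_upwards [Ioi_mem_nhds hy] with u hu
  exact upperIncGamma_eq_Gamma_sub_integral hb hu.le

lemma continuousWithinAt_upperIncGamma_zero (hb : 0 < b) :
    ContinuousWithinAt (upperIncGamma b) (Ici 0) 0 := by
  have hprim : ContinuousWithinAt (fun u => ∫ t in (0 : ℝ)..u, t ^ (b - 1) * exp (-t))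
      (Icc 0 1) 0 :=
    intervalIntegral.continuousWithinAt_primitive (measure_singleton 0) (by
      simpa using intervalIntegrable_rpow_mul_exp_neg hb zero_le_one)
  refine (continuousWithinAt_const.sub hprim).congr
    (fun u hu => upperIncGamma_eq_Gamma_sub_integral hb hu.1)
    (upperIncGamma_eq_Gamma_sub_integral hb le_rfl) |>.mono_of_mem_nhdsWithin ?_
  exact Icc_mem_nhdsGE zero_lt_one

end UpperIncGamma

section Rayleigh

variable {a b γbar : ℝ}

lemma hasDerivAt_upperIncGamma_const_mul (ha : 0 < a) (hb : 0 < b) {x : ℝ} (hx : 0 < x) :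
    HasDerivAt (fun x => upperIncGamma b (a * x))
      (-(a ^ b * (x ^ (b - 1) * exp (-(a * x))))) x := by
  have hscale : a * (a * x) ^ (b - 1) = a ^ b * x ^ (b - 1) := by
    rw [mul_rpow ha.le hx.le, rpow_sub_one ha.ne']
    field_simp
  refine ((hasDerivAt_upperIncGamma hb (mul_pos ha hx)).comp x
    ((hasDerivAt_id x).const_mul a)).congr_deriv ?_
  linear_combination -exp (-(a * x)) * hscale

lemma hasDerivAt_exp_neg_div (x : ℝ) :
    HasDerivAt (fun x => exp (-x / γbar)) (-(1 / γbar) * exp (-x / γbar)) x := by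
  convert ((hasDerivAt_neg x).div_const γbar).exp using 1
  ring

lemma integrableOn_exp_mul_upperIncGamma (ha : 0 < a) (hb : 0 < b) (hγ : 0 < γbar) :
    IntegrableOn (fun x => (1 / γbar) * exp (-x / γbar) * upperIncGamma b (a * x)) (Ioi 0) := by
  have hexp : IntegrableOn (fun x => (1 / γbar) * exp (-x / γbar)) (Ioi 0) := by
    refine IntegrableOn.congr_fun
      ((exp_neg_integrableOn_Ioi 0 (inv_pos.mpr hγ)).const_mul (1 / γbar))
      (fun x _ => ?_) measurableSet_Ioi
    rw [neg_mul, inv_mul_eq_div, neg_div]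
  have hcont : ContinuousOn (fun x => upperIncGamma b (a * x)) (Ioi 0) := fun x hx =>
    (hasDerivAt_upperIncGamma_const_mul ha hb hx).continuousAt.continuousWithinAt
  refine hexp.mul_bdd (c := Gamma b) (hcont.aestronglyMeasurable measurableSet_Ioi) ?_
  refine (ae_restrict_iff' measurableSet_Ioi).mpr <| ae_of_all _ fun x hx => ?_
  have hax : 0 ≤ a * x := mul_nonneg ha.le (le_of_lt hx)
  rw [norm_of_nonneg (upperIncGamma_nonneg hax)]
  exact upperIncGamma_le_Gamma hb hax

lemma tendsto_exp_mul_upperIncGamma_atTop (ha : 0 < a) (hb : 0 < b) (hγ : 0 < γbar) :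
    Tendsto (fun x => exp (-x / γbar) * upperIncGamma b (a * x)) atTop (𝓝 0) := by
  have hexp : Tendsto (fun x => exp (-x / γbar)) atTop (𝓝 0) :=
    tendsto_exp_atBot.comp (tendsto_neg_atTop_atBot.atBot_div_const hγ)
  refine hexp.zero_mul_isBoundedUnder_le (isBoundedUnder_of_eventually_le (a := Gamma b) ?_)
  filter_upwards [eventually_ge_atTop 0] with x hx
  have hax : 0 ≤ a * x := mul_nonneg ha.le hx
  simpa only [Function.comp_apply, norm_of_nonneg (upperIncGamma_nonneg hax)] using
    upperIncGamma_le_Gamma hb hax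

theorem integral_exp_mul_upperIncGamma (ha : 0 < a) (hb : 0 < b) (hγ : 0 < γbar) :
    ∫ x in Ioi (0 : ℝ), (1 / γbar) * exp (-x / γbar) * upperIncGamma b (a * x)
      = Gamma b * (1 - (a * γbar / (1 + a * γbar)) ^ b) := by
  set c := a + 1 / γbar with hc_def
  have hc : 0 < c := by positivity
  have hint := integrableOn_exp_mul_upperIncGamma ha hb hγ
  have hint' : IntegrableOn (fun x => a ^ b * (x ^ (b - 1) * exp (-(c * x)))) (Ioi 0) :=
    (integrableOn_rpow_mul_exp_neg_mul_Ioi hb hc).const_mul _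
  have hderiv : ∀ x ∈ Ioi (0 : ℝ),
      HasDerivAt (fun x => -(exp (-x / γbar) * upperIncGamma b (a * x)))
      ((1 / γbar) * exp (-x / γbar) * upperIncGamma b (a * x)
        + a ^ b * (x ^ (b - 1) * exp (-(c * x)))) x := fun x hx => by
    have hexp : exp (-(c * x)) = exp (-x / γbar) * exp (-(a * x)) := by
      rw [← exp_add, hc_def]; congr 1; ring
    refine ((hasDerivAt_exp_neg_div x).mul
      (hasDerivAt_upperIncGamma_const_mul ha hb hx)).neg.congr_deriv ?_
    rw [hexp]; ring
  have hcont :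
      ContinuousWithinAt (fun x => -(exp (-x / γbar) * upperIncGamma b (a * x))) (Ici 0) 0 :=
    ((by fun_prop : Continuous fun x => exp (-x / γbar)).continuousWithinAt.mul
      ((continuousWithinAt_upperIncGamma_zero hb).comp_of_eq
        (continuous_const_mul a).continuousWithinAt
        (fun x hx => mul_nonneg ha.le hx) (mul_zero a))).neg
  have hFTC := integral_Ioi_of_hasDerivAt_of_tendsto hcont hderiv (hint.add hint')
    (by simpa using (tendsto_exp_mul_upperIncGamma_atTop ha hb hγ).neg)
  have hratio : a ^ b * (1 / c) ^ b = (a * γbar / (1 + a * γbar)) ^ b := by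
    rw [← mul_rpow ha.le (by positivity), hc_def, add_comm 1]
    field_simp
  rw [integral_add hint hint', integral_const_mul, integral_rpow_mul_exp_neg_mul_Ioi hb hc,
    ← mul_assoc, hratio] at hFTC
  rw [mul_zero, upperIncGamma_zero hb, neg_zero, zero_div, exp_zero] at hFTC
  linear_combination hFTC

end Rayleigh

/-- **Average bit error rate of Wojnar's unified binary modulation over
Rayleigh fading.**  For `a, b, γ̄ > 0` and an exponentially distributed SNR
with mean `γ̄`,
`∫₀^∞ (1/γ̄) e^{−x/γ̄} Γ(b, ax) dx = Γ(b) (1 − (aγ̄/(1+aγ̄))^b)`,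
and consequently `E_avg(γ̄) = 1/2 − (1/2)(aγ̄/(1+aγ̄))^b`. -/
theorem aber_rayleigh_wojnar (a b γbar : ℝ) (ha : 0 < a) (hb : 0 < b)
    (hγ : 0 < γbar) :
    (∫ x in Set.Ioi (0 : ℝ),
        (1 / γbar) * Real.exp (-x / γbar) * upperIncGamma b (a * x))
      = Real.Gamma b * (1 - (a * γbar / (1 + a * γbar)) ^ b)
    ∧ (∫ x in Set.Ioi (0 : ℝ),
        (1 / γbar) * Real.exp (-x / γbar) *
          (upperIncGamma b (a * x) / (2 * Real.Gamma b)))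
      = 1 / 2 - (1 / 2) * (a * γbar / (1 + a * γbar)) ^ b := by
  have hint := integral_exp_mul_upperIncGamma ha hb hγ
  refine ⟨hint, ?_⟩
  have hΓ : Gamma b ≠ 0 := (Gamma_pos_of_pos hb).ne'
  simp_rw [← mul_div_assoc]
  rw [integral_div, hint]
  field_simp
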